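/- Let A(t) be the generator of a C_0-quasi-semigroup {R(t,s)} on a Banach space X with A(t+h)=A(t) for all t,h ≥ 0. Then e^{σ_a(A(t)) s} ⊆ σ_a(R(t,s)): if λ ∈ σ_a(A(t)) with approximate eigenvector (x_n) ⊂ D, ‖x_n‖ = 1, ‖(λ − A(t))x_n‖ → 0, then ‖(e^{λs} − R(t,s))x_n‖ → 0, so e^{λs} ∈ σ_a(R(t,s)). -/

import Mathlib

open Filter Topology MeasureTheory Set

variable {X : Type*}

/-- A strongly continuous quasi-semigroup of bounded operators. -/
def IsQuasiSemigroup [NormedAddCommGroup X] [NormedSpace ℂ X]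
    (R : ℝ → ℝ → X →L[ℂ] X) : Prop :=
  (∀ t : ℝ, 0 ≤ t → R t 0 = 1) ∧
  (∀ t s r : ℝ, 0 ≤ t → 0 ≤ s → 0 ≤ r → R t (s + r) = (R (t + r) s).comp (R t r)) ∧
  (∀ t : ℝ, 0 ≤ t → ∀ x : X, Tendsto (fun s => R t s x) (nhdsWithin 0 (Set.Ici 0)) (nhds x)) ∧
  (∃ M : ℝ → ℝ, Continuous M ∧ Monotone M ∧ (∀ u : ℝ, 0 ≤ u → 1 ≤ M u) ∧
    ∀ t s : ℝ, 0 ≤ t → 0 ≤ s → ‖R t s‖ ≤ M (t + s))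

/-- The limit defining the generator at time `t`. -/
def GenLimit [NormedAddCommGroup X] [NormedSpace ℂ X]
    (R : ℝ → ℝ → X →L[ℂ] X) (t : ℝ) (x y : X) : Prop :=
  Tendsto (fun s : ℝ => s⁻¹ • (R t s x - x)) (nhdsWithin 0 (Set.Ioi 0)) (nhds y)

/-- The auxiliary backwards limit defining the generator at time `t`. -/
def GenLimit' [NormedAddCommGroup X] [NormedSpace ℂ X]
    (R : ℝ → ℝ → X →L[ℂ] X) (t : ℝ) (x y : X) : Prop :=
  Tendsto (fun s : ℝ => s⁻¹ • (R (t - s) s x - x)) (nhdsWithin 0 (Set.Ioi 0)) (nhds y)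

/-- `A` is the generator family of the quasi-semigroup `R`, with (common) domain `D`. -/
def IsGenerator [NormedAddCommGroup X] [NormedSpace ℂ X]
    (R : ℝ → ℝ → X →L[ℂ] X) (A : ℝ → X → X) (D : Set X) : Prop :=
  (∀ x : X, x ∈ D ↔
    ((∃ y, GenLimit R 0 x y) ∧ ∀ t : ℝ, 0 < t → ∃ y, GenLimit R t x y ∧ GenLimit' R t x y)) ∧
  (∀ t : ℝ, 0 ≤ t → ∀ x ∈ D, GenLimit R t x (A t x))

/-!
For `x` in the domain, the function `φ(τ) = e^{λ(τ-t)} R(τ, t+s-τ) x` runs from `R(t,s) x` at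
`τ = t` to `e^{λs} x` at `τ = t+s`. The quasi-semigroup law factors its increments as
`φ(τ+ε) - φ(τ) = e^{λ(τ-t)} R(τ+ε, t+s-τ-ε) (e^{λε} x - R(τ,ε) x)`, and since `A(τ) = A(t)`,
`ε⁻¹ (e^{λε} x - R(τ,ε) x) → λx - A(t)x`. So `φ` has right Dini derivatives bounded by a
multiple of `‖(λ - A(t))x‖`, and a mean value inequality bounds `‖(e^{λs} - R(t,s))x‖` by
`C s ‖(λ - A(t))x‖`, which tends to `0` along an approximate eigenvector. The mean value
inequality needs `φ` continuous; from the left this is the backward limit `R(τ-ε, ε) x → x`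
that membership in the domain provides.
-/

theorem tendsto_of_tendsto_inv_smul_sub {E : Type*} [NormedAddCommGroup E] [NormedSpace ℝ E]
    {f : ℝ → E} {x y : E} (h : Tendsto (fun ε : ℝ => ε⁻¹ • (f ε - x)) (𝓝[>] 0) (𝓝 y)) :
    Tendsto f (𝓝[>] 0) (𝓝 x) := by
  have hlim : Tendsto (fun ε : ℝ => x + ε • (ε⁻¹ • (f ε - x))) (𝓝[>] 0) (𝓝 (x + (0 : ℝ) • y)) :=
    tendsto_const_nhds.add ((tendsto_id.mono_left nhdsWithin_le_nhds).smul h)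
  rw [zero_smul, add_zero] at hlim
  refine hlim.congr' ?_
  filter_upwards [self_mem_nhdsWithin] with ε (hε : 0 < ε)
  rw [smul_inv_smul₀ hε.ne', add_sub_cancel]

theorem norm_image_sub_le_of_frequently_norm_sub_lt {E : Type*} [NormedAddCommGroup E]
    {f : ℝ → E} {a b C : ℝ} (hab : a ≤ b) (hf : ContinuousOn f (Icc a b))
    (hslope : ∀ x ∈ Ico a b, ∀ r, C < r → ∃ᶠ ε in 𝓝[>] 0, ‖f (x + ε) - f x‖ < r * ε) :
    ‖f b - f a‖ ≤ C * (b - a) := by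
  refine image_le_of_liminf_slope_right_le_deriv_boundary (f := fun z => ‖f z - f a‖)
    (B := fun z => C * (z - a)) (B' := fun _ => C) (hf.sub continuousOn_const).norm (by simp)
    (by fun_prop) (fun x _ => ?_) (fun x hx r hr => ?_) (right_mem_Icc.2 hab)
  · simpa using (((hasDerivAt_id x).sub_const a).const_mul C).hasDerivWithinAt
  have hshift : Tendsto (x + ·) (𝓝[>] 0) (𝓝[>] x) := by
    rw [Tendsto, map_add_left_nhdsGT, add_zero]
  refine hshift.frequently (((hslope x hx r hr).and_eventually self_mem_nhdsWithin).mono ?_)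
  rintro ε ⟨hlt, hε : 0 < ε⟩
  have hsub := norm_sub_norm_le (f (x + ε) - f a) (f x - f a)
  rw [sub_sub_sub_cancel_right] at hsub
  rw [slope_def_field, add_sub_cancel_left, div_lt_iff₀ hε]
  exact hsub.trans_lt hlt

theorem norm_cexp_mul_ofReal_le (lam : ℂ) {u s : ℝ} (hu : 0 ≤ u) (hus : u ≤ s) :
    ‖Complex.exp (lam * u)‖ ≤ Real.exp (|lam.re| * s) := by
  rw [Complex.norm_exp, Complex.re_mul_ofReal]
  exact Real.exp_le_exp.2 ((mul_le_mul_of_nonneg_right (le_abs_self _) hu).trans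
    (mul_le_mul_of_nonneg_left hus (abs_nonneg _)))

theorem not_exists_pos_mul_norm_le_of_tendsto {E F : Type*} [Norm E] [Norm F] {f : E → F}
    {u : ℕ → E} (hu : ∀ n, ‖u n‖ = 1) (hf : Tendsto (fun n => ‖f (u n)‖) atTop (𝓝 0)) :
    ¬ ∃ c : ℝ, 0 < c ∧ ∀ y, c * ‖y‖ ≤ ‖f y‖ := by
  rintro ⟨c, hc, hbound⟩
  obtain ⟨n, hn⟩ := (hf.eventually_lt_const hc).exists
  have hcn := hbound (u n)
  rw [hu n, mul_one] at hcn
  exact hcn.not_gt hn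

section QuasiSemigroup

variable [NormedAddCommGroup X] [NormedSpace ℂ X] {R : ℝ → ℝ → X →L[ℂ] X}

theorem GenLimit'.tendsto_apply {τ : ℝ} {x y : X} (h : GenLimit' R τ x y) :
    Tendsto (fun ε : ℝ => R (τ - ε) ε x) (𝓝[>] 0) (𝓝 x) :=
  tendsto_of_tendsto_inv_smul_sub h

theorem GenLimit.tendsto_exp_smul_sub {τ : ℝ} {x y : X} (h : GenLimit R τ x y) (lam : ℂ) :
    Tendsto (fun ε : ℝ => ε⁻¹ • (Complex.exp (lam * ε) • x - R τ ε x)) (𝓝[>] 0)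
      (𝓝 (lam • x - y)) := by
  have hexp : HasDerivAt (fun r : ℝ => Complex.exp (lam * r) • x) (lam • x) 0 := by
    simpa using ((hasDerivAt_id (0 : ℝ)).ofReal_comp.const_mul lam).cexp.smul_const x
  refine (hexp.tendsto_slope_zero_right.sub h).congr fun ε => ?_
  simp [smul_sub]

namespace IsQuasiSemigroup

variable {t τ τ' T K : ℝ}

theorem apply_sub_eq_comp (hR : IsQuasiSemigroup R) (hτ : 0 ≤ τ) (hττ' : τ ≤ τ')
    (hτ'T : τ' ≤ T) : R τ (T - τ) = (R τ' (T - τ')).comp (R τ (τ' - τ)) := by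
  have h := hR.2.1 τ (T - τ') (τ' - τ) hτ (by linarith) (by linarith)
  rwa [sub_add_sub_cancel, add_sub_cancel] at h

theorem norm_apply_sub_sub_apply_sub_le (hR : IsQuasiSemigroup R)
    (hK : ∀ a b, 0 ≤ a → 0 ≤ b → a + b = T → ‖R a b‖ ≤ K)
    (hτ : 0 ≤ τ) (hττ' : τ ≤ τ') (hτ'T : τ' ≤ T) (x y : X) :
    ‖R τ' (T - τ') y - R τ (T - τ) x‖ ≤ K * ‖y - R τ (τ' - τ) x‖ := by
  rw [hR.apply_sub_eq_comp hτ hττ' hτ'T, ContinuousLinearMap.comp_apply, ← map_sub]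
  exact (R τ' (T - τ')).le_of_opNorm_le (hK _ _ (by linarith) (by linarith) (by ring)) _

theorem continuousOn_apply_sub (hR : IsQuasiSemigroup R)
    (hK : ∀ a b, 0 ≤ a → 0 ≤ b → a + b = T → ‖R a b‖ ≤ K) (ht : 0 ≤ t) {x : X}
    (hx : ∀ τ ∈ Ioc t T, Tendsto (fun ε : ℝ => R (τ - ε) ε x) (𝓝[>] 0) (𝓝 x)) :
    ContinuousOn (fun τ => R τ (T - τ) x) (Icc t T) := by
  rintro τ₀ ⟨htτ₀, hτ₀T⟩
  rw [ContinuousWithinAt, ← Ico_union_Icc_eq_Icc htτ₀ hτ₀T, nhdsWithin_union, tendsto_sup]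
  refine ⟨?_, ?_⟩ <;> rw [tendsto_iff_norm_sub_tendsto_zero]
  · rcases htτ₀.eq_or_lt with rfl | hlt
    · simp
    have hshift : Tendsto (fun τ => τ₀ - τ) (𝓝[Ico t τ₀] τ₀) (𝓝[>] 0) := by
      refine tendsto_nhdsWithin_of_tendsto_nhds_of_eventually_within _
        (((continuous_sub_left τ₀).tendsto' τ₀ 0 (sub_self τ₀)).mono_left nhdsWithin_le_nhds) ?_
      filter_upwards [self_mem_nhdsWithin] with τ hτ using sub_pos.2 hτ.2
    have hlim := (((tendsto_const_nhds (x := x)).sub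
      ((hx τ₀ ⟨hlt, hτ₀T⟩).comp hshift)).norm).const_mul K
    refine squeeze_zero' (.of_forall fun _ => norm_nonneg _) ?_ (by simpa using hlim)
    filter_upwards [self_mem_nhdsWithin] with τ hτ
    rw [norm_sub_rev]
    exact hR.norm_apply_sub_sub_apply_sub_le hK (ht.trans hτ.1) hτ.2.le hτ₀T x x
  · have hshift : Tendsto (fun τ => τ - τ₀) (𝓝[Icc τ₀ T] τ₀) (𝓝[Ici 0] 0) := by
      refine tendsto_nhdsWithin_of_tendsto_nhds_of_eventually_within _
        (((continuous_sub_right τ₀).tendsto' τ₀ 0 (sub_self τ₀)).mono_left nhdsWithin_le_nhds) ?_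
      filter_upwards [self_mem_nhdsWithin] with τ hτ using sub_nonneg.2 hτ.1
    have hlim := (((tendsto_const_nhds (x := x)).sub
      ((hR.2.2.1 τ₀ (ht.trans htτ₀) x).comp hshift)).norm).const_mul K
    refine squeeze_zero' (.of_forall fun _ => norm_nonneg _) ?_ (by simpa using hlim)
    filter_upwards [self_mem_nhdsWithin] with τ hτ
    exact hR.norm_apply_sub_sub_apply_sub_le hK (ht.trans htτ₀) hτ.1 hτ.2 x x

theorem norm_exp_smul_apply_sub_exp_smul_apply_le (hR : IsQuasiSemigroup R) {s ε : ℝ}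
    (hK : ∀ a b, 0 ≤ a → 0 ≤ b → a + b = t + s → ‖R a b‖ ≤ K) (ht : 0 ≤ t) (htτ : t ≤ τ)
    (hε : 0 ≤ ε) (hτε : τ + ε ≤ t + s) (lam : ℂ) (x : X) :
    ‖Complex.exp (lam * (τ + ε - t : ℝ)) • R (τ + ε) (t + s - (τ + ε)) x -
        Complex.exp (lam * (τ - t : ℝ)) • R τ (t + s - τ) x‖ ≤
      Real.exp (|lam.re| * s) * K * ‖Complex.exp (lam * ε) • x - R τ ε x‖ := by
  have hsplit : Complex.exp (lam * (τ + ε - t : ℝ)) • R (τ + ε) (t + s - (τ + ε)) x -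
      Complex.exp (lam * (τ - t : ℝ)) • R τ (t + s - τ) x = Complex.exp (lam * (τ - t : ℝ)) •
        (R (τ + ε) (t + s - (τ + ε)) (Complex.exp (lam * ε) • x) - R τ (t + s - τ) x) := by
    simp only [map_smul, smul_sub, smul_smul, ← Complex.exp_add]
    congr 3
    push_cast
    ring
  have hR_le := hR.norm_apply_sub_sub_apply_sub_le hK (ht.trans htτ)
    (le_add_of_nonneg_right hε) hτε x (Complex.exp (lam * ε) • x)
  rw [add_sub_cancel_left] at hR_le
  rw [hsplit, norm_smul, mul_assoc]
  exact mul_le_mul (norm_cexp_mul_ofReal_le lam (sub_nonneg.2 htτ) (by linarith))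
    hR_le (norm_nonneg _) (Real.exp_pos _).le

theorem norm_exp_smul_sub_apply_le (hR : IsQuasiSemigroup R) {s : ℝ} (ht : 0 ≤ t) (hs : 0 ≤ s)
    (hK : ∀ a b, 0 ≤ a → 0 ≤ b → a + b = t + s → ‖R a b‖ ≤ K) {x y : X}
    (hgen : ∀ τ ∈ Ico t (t + s), GenLimit R τ x y)
    (hback : ∀ τ ∈ Ioc t (t + s), Tendsto (fun ε : ℝ => R (τ - ε) ε x) (𝓝[>] 0) (𝓝 x))
    (lam : ℂ) :
    ‖Complex.exp (lam * s) • x - R t s x‖ ≤ Real.exp (|lam.re| * s) * K * ‖lam • x - y‖ * s := by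
  set E := Real.exp (|lam.re| * s)
  set φ : ℝ → X := fun τ => Complex.exp (lam * (τ - t : ℝ)) • R τ (t + s - τ) x with hφ
  have hφ_cont : ContinuousOn φ (Icc t (t + s)) :=
    (by fun_prop : Continuous fun τ : ℝ => Complex.exp (lam * (τ - t : ℝ))).continuousOn.smul
      (hR.continuousOn_apply_sub hK ht hback)
  have hmvt := norm_image_sub_le_of_frequently_norm_sub_lt (C := E * K * ‖lam • x - y‖)
    (le_add_of_nonneg_right hs) hφ_cont fun τ hτ r hr => by
      have hev :=
        (((hgen τ hτ).tendsto_exp_smul_sub lam).norm.const_mul (E * K)).eventually_lt_const hr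
      refine (hev.and (Ioc_mem_nhdsGT (sub_pos.2 hτ.2))).frequently.mono ?_
      rintro ε ⟨hεr, hε0, hεs⟩
      calc ‖φ (τ + ε) - φ τ‖ ≤ E * K * ‖Complex.exp (lam * ε) • x - R τ ε x‖ :=
            hR.norm_exp_smul_apply_sub_exp_smul_apply_le hK ht hτ.1 hε0.le (by linarith) lam x
        _ = E * K * ‖ε⁻¹ • (Complex.exp (lam * ε) • x - R τ ε x)‖ * ε := by
            rw [norm_smul, Real.norm_of_nonneg (inv_nonneg.2 hε0.le)]
            field_simp
        _ < r * ε := mul_lt_mul_of_pos_right hεr hε0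
  have hφ_end : φ (t + s) = Complex.exp (lam * s) • x := by
    simp [hφ, hR.1 (t + s) (by linarith)]
  have hφ_start : φ t = R t s x := by
    simp [hφ]
  rwa [hφ_end, hφ_start, add_sub_cancel_left] at hmvt

end IsQuasiSemigroup

namespace IsGenerator

variable {A : ℝ → X → X} {D : Set X} {x : X}

theorem tendsto_apply_sub (hA : IsGenerator R A D) (hx : x ∈ D) {τ : ℝ} (hτ : 0 < τ) :
    Tendsto (fun ε : ℝ => R (τ - ε) ε x) (𝓝[>] 0) (𝓝 x) := by
  obtain ⟨y, -, hy⟩ := ((hA.1 x).1 hx).2 τ hτ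
  exact hy.tendsto_apply

theorem genLimit_of_le (hA : IsGenerator R A D)
    (hconst : ∀ t h : ℝ, 0 ≤ t → 0 ≤ h → A (t + h) = A t) {t τ : ℝ} (ht : 0 ≤ t) (htτ : t ≤ τ)
    (hx : x ∈ D) : GenLimit R τ x (A t x) := by
  have hAτ := hconst t (τ - t) ht (sub_nonneg.2 htτ)
  rw [add_sub_cancel] at hAτ
  exact hAτ ▸ hA.2 τ (ht.trans htτ) x hx

end IsGenerator

end QuasiSemigroup

theorem quasiSemigroup_approximate_spectral_inclusion_general
    [NormedAddCommGroup X] [NormedSpace ℂ X]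
    (R : ℝ → ℝ → X →L[ℂ] X) (hR : IsQuasiSemigroup R)
    (A : ℝ → X → X) (D : Set X) (hA : IsGenerator R A D)
    (hconst : ∀ t h : ℝ, 0 ≤ t → 0 ≤ h → A (t + h) = A t)
    (lam : ℂ) (t s : ℝ) (ht : 0 ≤ t) (hs : 0 ≤ s)
    (xseq : ℕ → X) (hmem : ∀ n, xseq n ∈ D) (hnorm : ∀ n, ‖xseq n‖ = 1)
    (happrox : Tendsto (fun n => ‖lam • xseq n - A t (xseq n)‖) atTop (nhds 0)) :
    Tendsto (fun n => ‖Complex.exp (lam * (s : ℂ)) • xseq n - R t s (xseq n)‖) atTop (nhds 0) ∧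
    ¬ ∃ c : ℝ, 0 < c ∧ ∀ y : X, c * ‖y‖ ≤ ‖Complex.exp (lam * (s : ℂ)) • y - R t s y‖ := by
  obtain ⟨M, -, -, -, hM⟩ := hR.2.2.2
  have hK : ∀ a b, 0 ≤ a → 0 ≤ b → a + b = t + s → ‖R a b‖ ≤ M (t + s) :=
    fun a b ha hb hab => hab ▸ hM a b ha hb
  have hest : ∀ n, ‖Complex.exp (lam * s) • xseq n - R t s (xseq n)‖ ≤
      Real.exp (|lam.re| * s) * M (t + s) * ‖lam • xseq n - A t (xseq n)‖ * s := fun n =>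
    hR.norm_exp_smul_sub_apply_le ht hs hK
      (fun τ hτ => hA.genLimit_of_le hconst ht hτ.1 (hmem n))
      (fun τ hτ => hA.tendsto_apply_sub (hmem n) (ht.trans_lt hτ.1)) lam
  have hlim : Tendsto (fun n => ‖Complex.exp (lam * s) • xseq n - R t s (xseq n)‖) atTop (𝓝 0) :=
    squeeze_zero (fun n => norm_nonneg _) hest
      (by simpa using (happrox.const_mul (Real.exp (|lam.re| * s) * M (t + s))).mul_const s)
  exact ⟨hlim, not_exists_pos_mul_norm_le_of_tendsto hnorm hlim⟩

/-- Approximate point spectral inclusion: an approximate eigenvector of `A(t)` for `λ`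
is an approximate eigenvector of `R(t,s)` for `e^{λs}`, so `e^{λs} ∈ σₐ(R(t,s))`. -/
theorem quasiSemigroup_approximate_spectral_inclusion
    [NormedAddCommGroup X] [NormedSpace ℂ X] [CompleteSpace X]
    (R : ℝ → ℝ → X →L[ℂ] X) (hR : IsQuasiSemigroup R)
    (A : ℝ → X → X) (D : Set X) (hA : IsGenerator R A D)
    (hconst : ∀ t h : ℝ, 0 ≤ t → 0 ≤ h → A (t + h) = A t)
    (lam : ℂ) (t s : ℝ) (ht : 0 ≤ t) (hs : 0 ≤ s)
    (xseq : ℕ → X) (hmem : ∀ n, xseq n ∈ D) (hnorm : ∀ n, ‖xseq n‖ = 1)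
    (happrox : Tendsto (fun n => ‖lam • xseq n - A t (xseq n)‖) atTop (nhds 0)) :
    Tendsto (fun n => ‖Complex.exp (lam * (s : ℂ)) • xseq n - R t s (xseq n)‖) atTop (nhds 0) ∧
    ¬ ∃ c : ℝ, 0 < c ∧ ∀ y : X, c * ‖y‖ ≤ ‖Complex.exp (lam * (s : ℂ)) • y - R t s y‖ :=
  quasiSemigroup_approximate_spectral_inclusion_general R hR A D hA hconst lam t s ht hs xseq hmem
    hnorm happrox
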